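/- arXiv:1405.7114 — 2 statements merged into one kernel-verified Lean document; each statement's English description precedes it below -/
import Mathlib

section
/- For q > 0, c ∈ (0,π) ∪ (−π,0), and b > 1, with L = log b, one has ∫_{−L}^{L} coth(qβ + ic) dβ = (1/q) · Log( (b^q e^{ic} − b^{−q} e^{−ic}) / (−(b^q e^{−ic} − b^{−q} e^{ic})) ), where Log is the principal branch of the complex logarithm with imaginary part in (−π, π). -/
open MeasureTheory Filter Complex

noncomputable def cth (z : ℂ) : ℂ := Complex.cosh z / Complex.sinh z

lemma arg_pos_of_im_pos {z : ℂ} (h : 0 < z.im) : 0 < z.arg := by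
  rcases eq_or_lt_of_le (Complex.arg_nonneg_iff.mpr h.le) with h0 | h0
  · exfalso
    have := (Complex.arg_eq_zero_iff.mp h0.symm).2
    rw [this] at h; exact lt_irrefl 0 h
  · exact h0

lemma log_div_same_sign {z w : ℂ} (h : (0 < z.im ∧ 0 < w.im) ∨ (z.im < 0 ∧ w.im < 0)) :
    Complex.log (z / w) = Complex.log z - Complex.log w := by
  have hz : z ≠ 0 := by rintro rfl; rcases h with ⟨h1, _⟩ | ⟨h1, _⟩ <;> simp at h1
  have hw : w ≠ 0 := by rintro rfl; rcases h with ⟨_, h1⟩ | ⟨_, h1⟩ <;> simp at h1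
  have hwpi : w.arg ≠ Real.pi := by
    intro h0
    obtain ⟨-, h1⟩ := Complex.arg_eq_pi_iff.mp h0
    rcases h with ⟨-, h2⟩ | ⟨-, h2⟩ <;> rw [h1] at h2 <;> exact lt_irrefl 0 h2
  have harg : z.arg + w⁻¹.arg ∈ Set.Ioc (-Real.pi) Real.pi := by
    rw [Complex.arg_inv, if_neg hwpi]
    rcases h with ⟨h1, h2⟩ | ⟨h1, h2⟩
    · have ha1 : 0 < z.arg := arg_pos_of_im_pos h1
      have ha2 : 0 < w.arg := arg_pos_of_im_pos h2
      have hb1 : z.arg ≤ Real.pi := Complex.arg_le_pi z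
      have hb2 : w.arg ≤ Real.pi := Complex.arg_le_pi w
      constructor <;> nlinarith
    · have ha1 : z.arg < 0 := Complex.arg_neg_iff.mpr h1
      have ha2 : w.arg < 0 := Complex.arg_neg_iff.mpr h2
      have hb1 : -Real.pi < z.arg := Complex.neg_pi_lt_arg z
      have hb2 : -Real.pi < w.arg := Complex.neg_pi_lt_arg w
      constructor <;> nlinarith
  rw [div_eq_mul_inv, Complex.log_mul hz (inv_ne_zero hw) harg,
    Complex.log_inv w hwpi, sub_eq_add_neg]

theorem stmt1 (q c b : ℝ) (hq : 0 < q)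
    (hc : c ∈ Set.Ioo (0 : ℝ) Real.pi ∪ Set.Ioo (-Real.pi) 0) (hb : 1 < b) :
    ∫ β in (-(Real.log b))..(Real.log b), cth ((q : ℂ) * β + Complex.I * c) =
      (1 / (q : ℂ)) * Complex.log
        ((((b ^ q : ℝ) : ℂ) * Complex.exp (Complex.I * c)
            - ((b ^ (-q) : ℝ) : ℂ) * Complex.exp (-(Complex.I * c))) /
          (-(((b ^ q : ℝ) : ℂ) * Complex.exp (-(Complex.I * c))
            - ((b ^ (-q) : ℝ) : ℂ) * Complex.exp (Complex.I * c)))) := by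
  have hq0 : (q : ℂ) ≠ 0 := by exact_mod_cast hq.ne'
  have hsin : Real.sin c ≠ 0 := by
    rcases hc with ⟨h1, h2⟩ | ⟨h1, h2⟩
    · exact (Real.sin_pos_of_pos_of_lt_pi h1 h2).ne'
    · have : Real.sin (-c) > 0 := Real.sin_pos_of_pos_of_lt_pi (by linarith) (by linarith)
      rw [Real.sin_neg] at this; linarith
  have him : ∀ x : ℝ, (Complex.sinh ((q : ℂ) * x + Complex.I * c)).im
      = Real.cosh (q * x) * Real.sin c := by
    intro x
    simp only [Complex.sinh, Complex.div_im, Complex.sub_im, Complex.sub_re, Complex.exp_im,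
      Complex.exp_re, Complex.neg_re, Complex.neg_im, Complex.add_re, Complex.add_im,
      Complex.mul_re, Complex.mul_im, Complex.I_re, Complex.I_im, Complex.ofReal_re,
      Complex.ofReal_im, Real.cosh_eq]
    simp [Real.sin_neg, Real.cos_neg]
    ring
  have hne : ∀ x : ℝ, Complex.sinh ((q : ℂ) * x + Complex.I * c) ≠ 0 := by
    intro x h0
    have h1 := him x
    rw [h0] at h1
    simp only [Complex.zero_im] at h1
    exact mul_ne_zero (Real.cosh_pos (x := q * x)).ne' hsin h1.symm
  have hslit : ∀ x : ℝ, Complex.sinh ((q : ℂ) * x + Complex.I * c) ∈ Complex.slitPlane := by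
    intro x
    rw [Complex.mem_slitPlane_iff]
    right
    rw [him x]
    exact mul_ne_zero (Real.cosh_pos (x := q * x)).ne' hsin
  have hderiv : ∀ x : ℝ, HasDerivAt
      (fun β : ℝ => (1 / (q : ℂ)) * Complex.log (Complex.sinh ((q : ℂ) * β + Complex.I * c)))
      (cth ((q : ℂ) * x + Complex.I * c)) x := by
    intro x
    have h0 : HasDerivAt (fun z : ℂ => (q : ℂ) * z + Complex.I * c) (q : ℂ) (x : ℂ) := by
      simpa using ((hasDerivAt_id (x : ℂ)).const_mul (q : ℂ)).add_const (Complex.I * c)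
    have h2 := h0.csinh
    have h3 := h2.clog (hslit x)
    have h4 := h3.comp_ofReal
    have h5 := h4.const_mul (1 / (q : ℂ))
    convert h5 using 1
    · rfl
    rw [cth]
    field_simp [hne x]
  have hcont : Continuous fun β : ℝ => cth ((q : ℂ) * β + Complex.I * c) := by
    apply Continuous.div
    · fun_prop
    · fun_prop
    · intro x; exact hne x
  have key := intervalIntegral.integral_eq_sub_of_hasDerivAt
    (f := fun β : ℝ => (1 / (q : ℂ)) * Complex.log (Complex.sinh ((q : ℂ) * β + Complex.I * c)))
    (a := -(Real.log b)) (b := Real.log b)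
    (fun x _ => hderiv x) (hcont.intervalIntegrable _ _)
  rw [key]
  have hb0 : 0 < b := lt_trans one_pos hb
  set L := Real.log b with hLdef
  have hexp : ∀ s : ℝ, ((b ^ s : ℝ) : ℂ) = Complex.exp (((s * L : ℝ)) : ℂ) := by
    intro s
    rw [Real.rpow_def_of_pos hb0, mul_comm, Complex.ofReal_exp]
  have hsinh : ∀ s : ℝ, Complex.sinh ((q : ℂ) * (s : ℂ) + Complex.I * c)
      = (Complex.exp (((q * s : ℝ)) : ℂ) * Complex.exp (Complex.I * c)
        - Complex.exp (((-(q * s) : ℝ)) : ℂ) * Complex.exp (-(Complex.I * c))) / 2 := by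
    intro s
    rw [Complex.sinh, ← Complex.exp_add, ← Complex.exp_add]
    push_cast
    ring_nf
  set N : ℂ := ((b ^ q : ℝ) : ℂ) * Complex.exp (Complex.I * c)
            - ((b ^ (-q) : ℝ) : ℂ) * Complex.exp (-(Complex.I * c)) with hN
  set D : ℂ := -(((b ^ q : ℝ) : ℂ) * Complex.exp (-(Complex.I * c))
            - ((b ^ (-q) : ℝ) : ℂ) * Complex.exp (Complex.I * c)) with hD
  have e1 : ((b ^ q : ℝ) : ℂ) = Complex.exp (((q * L : ℝ)) : ℂ) := hexp q
  have e2 : ((b ^ (-q) : ℝ) : ℂ) = Complex.exp (((-(q * L) : ℝ)) : ℂ) := by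
    rw [hexp (-q)]; norm_num
  have hz1 : Complex.sinh ((q : ℂ) * ((L : ℝ) : ℂ) + Complex.I * c) = N / 2 := by
    rw [hsinh L, hN, e1, e2]
  have hz2 : Complex.sinh ((q : ℂ) * ((-L : ℝ) : ℂ) + Complex.I * c) = D / 2 := by
    rw [hsinh (-L), hD, e1, e2]
    rw [show (-(q * -L) : ℝ) = q * L by ring, show (q * -L : ℝ) = -(q * L) by ring]
    ring
  have hD0 : D ≠ 0 := by
    intro h0
    apply hne (-L)
    rw [hz2, h0]; simp
  have himN : (N / 2).im = Real.cosh (q * L) * Real.sin c := by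
    rw [← hz1]; exact him L
  have himD : (D / 2).im = Real.cosh (q * (-L)) * Real.sin c := by
    rw [← hz2]; exact him (-L)
  have hsame : (0 < (N / 2).im ∧ 0 < (D / 2).im) ∨ ((N / 2).im < 0 ∧ (D / 2).im < 0) := by
    rw [himN, himD]
    have c1 := Real.cosh_pos (x := q * L)
    have c2 := Real.cosh_pos (x := q * (-L))
    rcases lt_or_gt_of_ne hsin with hs | hs
    · right; constructor <;> nlinarith
    · left; constructor <;> nlinarith
  have hlog : Complex.log (N / D) = Complex.log (N / 2) - Complex.log (D / 2) := by
    have hND : N / D = (N / 2) / (D / 2) := by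
      field_simp
    rw [hND]
    exact log_div_same_sign hsame
  show (1 / (q : ℂ)) * Complex.log (Complex.sinh ((q : ℂ) * ((L : ℝ) : ℂ) + Complex.I * c))
      - (1 / (q : ℂ)) * Complex.log (Complex.sinh ((q : ℂ) * ((-L : ℝ) : ℂ) + Complex.I * c))
      = (1 / (q : ℂ)) * Complex.log (N / D)
  rw [hz1, hz2, hlog]
  ring
end

section
/- Let F, F⁰ : ℝ → ℂ be measurable, bounded on compact sets, vanishing on (−∞,0), with R(t) := F(t) − F⁰(t) → 0 as t → ∞ and R bounded on [0,∞). Let Z : ℝ → ℂ be continuous with |Z(β)| ≤ C e^{−q|β|}, q > 0. Then for any fixed b > 0, sup_{0 < ρ ≤ b} | ∫_{−arcosh(t/ρ)}^{arcosh(t/ρ)} Z(β) R(t − ρ cosh β) dβ | → 0 as t → ∞. -/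
/-! Since `ρ ≤ b`, the integrand is dominated, uniformly in `ρ` and in the limits of integration,
by `C e^{-q|β|} m(t - b cosh β)`, where `m x := sup_{s ≥ x} ‖R s‖`. The majorant does not depend
on `ρ`, is bounded by `C e^{-q|β|} sup ‖R‖`, and tends to `0` pointwise as `t → ∞`, so its
integral over `ℝ` tends to `0` by dominated convergence. -/

open MeasureTheory Filter Complex

noncomputable def acosh (x : ℝ) : ℝ := Real.log (x + Real.sqrt (x ^ 2 - 1))

open Set
open scoped Topology Interval

noncomputable def tailSup {α : Type*} [Preorder α] (f : α → ℝ) (x : α) : ℝ := sSup (f '' Ici x)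

section TailSup

variable {α : Type*} {f : α → ℝ}

theorem le_tailSup [Preorder α] (hf : BddAbove (range f)) {x s : α} (hxs : x ≤ s) :
    f s ≤ tailSup f x :=
  le_csSup (hf.mono (image_subset_range f _)) (mem_image_of_mem f hxs)

theorem tailSup_le [Preorder α] {x : α} {c : ℝ} (h : ∀ s, x ≤ s → f s ≤ c) : tailSup f x ≤ c :=
  csSup_le (nonempty_Ici.image f) (forall_mem_image.2 h)

theorem antitone_tailSup [Preorder α] (hf : BddAbove (range f)) : Antitone (tailSup f) :=
  fun _ _ hxy => csSup_le_csSup (hf.mono (image_subset_range f _)) (nonempty_Ici.image f)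
    (image_mono (Ici_subset_Ici.2 hxy))

theorem tendsto_tailSup_atTop [SemilatticeSup α] [Nonempty α] (hf : BddAbove (range f))
    (hlim : Tendsto f atTop (𝓝 0)) : Tendsto (tailSup f) atTop (𝓝 0) := by
  refine tendsto_order.2 ⟨fun a ha => ?_, fun a ha => ?_⟩
  · exact (hlim.eventually (lt_mem_nhds ha)).mono fun x hx => hx.trans_le (le_tailSup hf le_rfl)
  · obtain ⟨S, hS⟩ := eventually_atTop.1 (hlim.eventually (gt_mem_nhds (half_pos ha)))
    filter_upwards [eventually_ge_atTop S] with x hx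
    exact (tailSup_le fun s hs => (hS s (hx.trans hs)).le).trans_lt (half_lt_self ha)

end TailSup

theorem integrable_exp_neg_mul_abs {q : ℝ} (hq : 0 < q) :
    Integrable fun x : ℝ => Real.exp (-q * |x|) := by
  rw [← integrableOn_univ, ← Iic_union_Ioi (a := (0 : ℝ))]
  refine IntegrableOn.union ?_ ?_
  · refine (integrableOn_exp_mul_Iic hq 0).congr_fun (fun x hx => ?_) measurableSet_Iic
    simp [abs_of_nonpos (mem_Iic.1 hx)]
  · refine (exp_neg_integrableOn_Ioi 0 hq).congr_fun (fun x hx => ?_) measurableSet_Ioi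
    simp [abs_of_pos (mem_Ioi.1 hx)]

theorem integrable_mul_comp_const_sub {w m φ : ℝ → ℝ} {M : ℝ} (hw : Integrable w)
    (hm : Antitone m) (hm_bdd : ∀ x, |m x| ≤ M) (hφ : Measurable φ) (t : ℝ) :
    Integrable fun β => w β * m (t - φ β) :=
  hw.mul_bdd (hm.measurable.comp (measurable_const.sub hφ)).aestronglyMeasurable
    (Eventually.of_forall fun _ => hm_bdd _)

theorem tendsto_integral_mul_comp_const_sub {w m φ : ℝ → ℝ} {M : ℝ} (hw : Integrable w)
    (hm : Antitone m) (hm_bdd : ∀ x, |m x| ≤ M) (hm_lim : Tendsto m atTop (𝓝 0))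
    (hφ : Measurable φ) : Tendsto (fun t => ∫ β, w β * m (t - φ β)) atTop (𝓝 0) := by
  have hdom := tendsto_integral_filter_of_dominated_convergence (fun β => ‖w β‖ * M)
    (Eventually.of_forall fun t =>
      (integrable_mul_comp_const_sub hw hm hm_bdd hφ t).aestronglyMeasurable)
    (Eventually.of_forall fun t => Eventually.of_forall fun β => by
      rw [norm_mul, Real.norm_eq_abs (m _)]
      exact mul_le_mul_of_nonneg_left (hm_bdd _) (norm_nonneg _))
    (hw.norm.mul_const M)
    (Eventually.of_forall fun β =>
      (hm_lim.comp (tendsto_atTop_add_const_right _ _ tendsto_id)).const_mul (w β))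
  simpa using hdom

theorem norm_intervalIntegral_le_integral {E : Type*} [NormedAddCommGroup E] [NormedSpace ℝ E]
    {f : ℝ → E} {g : ℝ → ℝ} (hg : Integrable g) (hfg : ∀ x, ‖f x‖ ≤ g x) (a b : ℝ) :
    ‖∫ x in a..b, f x‖ ≤ ∫ x, g x := by
  have hg0 : ∀ x, 0 ≤ g x := fun x => (norm_nonneg _).trans (hfg x)
  rw [intervalIntegral.norm_integral_eq_norm_integral_uIoc]
  calc ‖∫ x in Ι a b, f x‖ ≤ ∫ x in Ι a b, g x :=
        norm_integral_le_of_norm_le hg.integrableOn (Eventually.of_forall hfg)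
    _ ≤ ∫ x, g x := setIntegral_le_integral hg (Eventually.of_forall hg0)

theorem stmt8_general (F F₀ : ℝ → ℂ)
    (hF0 : ∀ s : ℝ, s < 0 → F s = 0) (hF₀0 : ∀ s : ℝ, s < 0 → F₀ s = 0)
    (hRlim : Tendsto (fun t : ℝ => F t - F₀ t) atTop (nhds 0))
    (MR : ℝ) (hRbd : ∀ t : ℝ, 0 ≤ t → ‖F t - F₀ t‖ ≤ MR)
    (Z : ℝ → ℂ)
    (C q : ℝ) (hq : 0 < q)
    (hZ : ∀ β : ℝ, ‖Z β‖ ≤ C * Real.exp (-q * |β|))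
    (b : ℝ) :
    ∀ ε : ℝ, 0 < ε → ∃ T : ℝ, ∀ t : ℝ, T ≤ t → ∀ ρ : ℝ, 0 < ρ → ρ ≤ b →
      ‖∫ β in (-(acosh (t / ρ)))..(acosh (t / ρ)),
          Z β * (F (t - ρ * Real.cosh β) - F₀ (t - ρ * Real.cosh β))‖ < ε := by
  intro ε hε
  have hR_bdd : ∀ s, ‖F s - F₀ s‖ ≤ MR := by
    intro s
    rcases lt_or_ge s 0 with hs | hs
    · simpa [hF0 s hs, hF₀0 s hs] using (norm_nonneg _).trans (hRbd 0 le_rfl)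
    · exact hRbd s hs
  have hbdd : BddAbove (range fun s => ‖F s - F₀ s‖) := ⟨MR, forall_mem_range.2 hR_bdd⟩
  set m := tailSup fun s => ‖F s - F₀ s‖
  have hm_nonneg : ∀ x, 0 ≤ m x := fun x => (norm_nonneg _).trans (le_tailSup hbdd le_rfl)
  have hm_bdd : ∀ x, |m x| ≤ MR := fun x =>
    (abs_of_nonneg (hm_nonneg x)).trans_le (tailSup_le fun s _ => hR_bdd s)
  have hm_anti : Antitone m := antitone_tailSup hbdd
  have hw := (integrable_exp_neg_mul_abs hq).const_mul C
  have hφ : Measurable fun β => b * Real.cosh β := measurable_const.mul Real.measurable_cosh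
  have hlim := tendsto_integral_mul_comp_const_sub hw hm_anti hm_bdd
    (tendsto_tailSup_atTop hbdd (by simpa using hRlim.norm)) hφ
  obtain ⟨T, hT⟩ := eventually_atTop.1 (hlim.eventually (gt_mem_nhds hε))
  refine ⟨T, fun t ht ρ _ hρb => ?_⟩
  refine (norm_intervalIntegral_le_integral (integrable_mul_comp_const_sub hw hm_anti hm_bdd hφ t)
    (fun β => ?_) _ _).trans_lt (hT t ht)
  have hshift : t - b * Real.cosh β ≤ t - ρ * Real.cosh β :=
    sub_le_sub_left (mul_le_mul_of_nonneg_right hρb (Real.cosh_pos β).le) t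
  rw [norm_mul]
  exact mul_le_mul (hZ β) (le_tailSup hbdd hshift) (norm_nonneg _) ((norm_nonneg _).trans (hZ β))

theorem stmt8 (F F₀ : ℝ → ℂ) (hFmeas : Measurable F) (hF₀meas : Measurable F₀)
    (hFloc : ∀ K : Set ℝ, IsCompact K → ∃ M : ℝ, ∀ s ∈ K, ‖F s‖ ≤ M)
    (hF₀loc : ∀ K : Set ℝ, IsCompact K → ∃ M : ℝ, ∀ s ∈ K, ‖F₀ s‖ ≤ M)
    (hF0 : ∀ s : ℝ, s < 0 → F s = 0) (hF₀0 : ∀ s : ℝ, s < 0 → F₀ s = 0)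
    (hRlim : Tendsto (fun t : ℝ => F t - F₀ t) atTop (nhds 0))
    (MR : ℝ) (hRbd : ∀ t : ℝ, 0 ≤ t → ‖F t - F₀ t‖ ≤ MR)
    (Z : ℝ → ℂ) (hZc : Continuous Z)
    (C q : ℝ) (hC : 0 < C) (hq : 0 < q)
    (hZ : ∀ β : ℝ, ‖Z β‖ ≤ C * Real.exp (-q * |β|))
    (b : ℝ) (hb : 0 < b) :
    ∀ ε : ℝ, 0 < ε → ∃ T : ℝ, ∀ t : ℝ, T ≤ t → ∀ ρ : ℝ, 0 < ρ → ρ ≤ b →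
      ‖∫ β in (-(acosh (t / ρ)))..(acosh (t / ρ)),
          Z β * (F (t - ρ * Real.cosh β) - F₀ (t - ρ * Real.cosh β))‖ < ε :=
  stmt8_general F F₀ hF0 hF₀0 hRlim MR hRbd Z C q hq hZ b
end
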